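/- arXiv:1610.03836 — 2 statements merged into one kernel-verified Lean document; each statement's English description precedes it below -/
import Mathlib

section
/- Let 𝒜 be an abelian category. Suppose given three short exact sequences 0→M→C→C₀→0, 0→M→B→B₀→0, 0→M→A→A₀→0 with the same first object M, together with morphisms c : C→A, c₀ : C₀→A₀, b : B→A, b₀ : B₀→A₀, and f₀ : C₀→B₀ such that (id_M, c, c₀) is a morphism of short exact sequences from the first to the third, (id_M, b, b₀) is a morphism of short exact sequences from the second to the third, and b₀ ∘ f₀ = c₀. Then there exists a morphism f : C→B such that (id_M, f, f₀) is a morphism of short exact sequences from the first to the second and moreover b ∘ f = c (so that the whole diagram commutes). -/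
/-!
Because the morphism `(𝟙 M, b, b₀)` of extensions is the identity on the kernel, its right-hand
square is a pullback: comparing `0 → M → B → B₀ → 0` with the pullback of `A → A₀` along `b₀`,
the five lemma makes `B ≅ A ×_{A₀} B₀`. The required `f` is then the map into this pullback
induced by `c` and `pC ≫ f₀`.
-/

open CategoryTheory Limits

namespace CategoryTheory.ShortComplex

variable {𝒜 : Type*} [Category 𝒜] [Abelian 𝒜]

noncomputable abbrev pullbackAlong (S : ShortComplex 𝒜) {Y : 𝒜} (v : Y ⟶ S.X₃) :
    ShortComplex 𝒜 :=
  ShortComplex.mk (pullback.lift S.f 0 (by simp) : S.X₁ ⟶ pullback S.g v) (pullback.snd S.g v)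
    (pullback.lift_snd _ _ _)

lemma ShortExact.pullbackAlong {S : ShortComplex 𝒜} (hS : S.ShortExact) {Y : 𝒜}
    (v : Y ⟶ S.X₃) : (S.pullbackAlong v).ShortExact := by
  have := hS.mono_f
  have := hS.epi_g
  refine .mk' ?_ (mono_of_mono_fac (pullback.lift_fst _ _ _)) inferInstance
  rw [exact_iff_exact_up_to_refinements]
  intro T x hx
  obtain ⟨T', π, hπ, x₁, hx₁⟩ := hS.exact.exact_up_to_refinements (x ≫ pullback.fst S.g v)
    (by simp [pullback.condition, reassoc_of% hx])
  refine ⟨T', π, hπ, x₁, pullback.hom_ext ?_ ?_⟩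
  · simpa [pullback.lift_fst] using hx₁
  · simp [pullback.lift_snd, hx]

lemma isPullback_of_shortExact_of_isIso₁ {S₁ S₂ : ShortComplex 𝒜} (φ : S₁ ⟶ S₂)
    (h₁ : S₁.ShortExact) (h₂ : S₂.ShortExact) [IsIso φ.τ₁] :
    IsPullback φ.τ₂ S₁.g S₂.g φ.τ₃ := by
  let ψ : S₁ ⟶ S₂.pullbackAlong φ.τ₃ :=
    { τ₁ := φ.τ₁
      τ₂ := pullback.lift φ.τ₂ S₁.g φ.comm₂₃
      τ₃ := 𝟙 _
      comm₁₂ := pullback.hom_ext (by simp [pullback.lift_fst, φ.comm₁₂])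
        (by simp [pullback.lift_snd])
      comm₂₃ := by simp [pullback.lift_snd] }
  have : IsIso ψ.τ₂ :=
    isIso₂_of_shortExact_of_isIso₁₃' ψ h₁ (h₂.pullbackAlong φ.τ₃) ‹_› inferInstance
  exact .of_iso_pullback ⟨φ.comm₂₃⟩ (asIso ψ.τ₂) (pullback.lift_fst _ _ _) (pullback.lift_snd _ _ _)

end CategoryTheory.ShortComplex

theorem stmt0_general {𝒜 : Type*} [Category 𝒜] [Abelian 𝒜]
    (M A A₀ B B₀ C C₀ : 𝒜)
    (iA : M ⟶ A) (pA : A ⟶ A₀) (iB : M ⟶ B) (pB : B ⟶ B₀) (iC : M ⟶ C) (pC : C ⟶ C₀)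
    (wA : iA ≫ pA = 0) (wB : iB ≫ pB = 0) (wC : iC ≫ pC = 0)
    (hA : (ShortComplex.mk iA pA wA).ShortExact)
    (hB : (ShortComplex.mk iB pB wB).ShortExact)
    (c : C ⟶ A) (c₀ : C₀ ⟶ A₀) (b : B ⟶ A) (b₀ : B₀ ⟶ A₀) (f₀ : C₀ ⟶ B₀)
    (hc1 : iC ≫ c = 𝟙 M ≫ iA) (hc2 : c ≫ pA = pC ≫ c₀)
    (hb1 : iB ≫ b = 𝟙 M ≫ iA) (hb2 : b ≫ pA = pB ≫ b₀)
    (hf : f₀ ≫ b₀ = c₀) :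
    ∃ f : C ⟶ B, iC ≫ f = 𝟙 M ≫ iB ∧ f ≫ pB = pC ≫ f₀ ∧ f ≫ b = c := by
  let φ : ShortComplex.mk iB pB wB ⟶ ShortComplex.mk iA pA wA := ⟨𝟙 M, b, b₀, hb1.symm, hb2⟩
  have sq : IsPullback b pB pA b₀ := ShortComplex.isPullback_of_shortExact_of_isIso₁ φ hB hA
  have hlift : c ≫ pA = (pC ≫ f₀) ≫ b₀ := by rw [hc2, Category.assoc, hf]
  refine ⟨sq.lift c (pC ≫ f₀) hlift, sq.hom_ext ?_ ?_, sq.lift_snd _ _ _, sq.lift_fst _ _ _⟩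
  · simp [hc1, hb1]
  · simp [reassoc_of% wC, wB]

/-- Given three short exact sequences `0 → M → C → C₀ → 0`,
`0 → M → B → B₀ → 0`, `0 → M → A → A₀ → 0` in an abelian category with the same
first object `M`, morphisms of short exact sequences `(𝟙 M, c, c₀)` from the first
to the third and `(𝟙 M, b, b₀)` from the second to the third, and `f₀ : C₀ ⟶ B₀`
with `b₀ ∘ f₀ = c₀`, there exists `f : C ⟶ B` such that `(𝟙 M, f, f₀)` is a morphism
of short exact sequences from the first to the second and `b ∘ f = c`. -/
theorem stmt0 {𝒜 : Type*} [Category 𝒜] [Abelian 𝒜]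
    (M A A₀ B B₀ C C₀ : 𝒜)
    (iA : M ⟶ A) (pA : A ⟶ A₀) (iB : M ⟶ B) (pB : B ⟶ B₀) (iC : M ⟶ C) (pC : C ⟶ C₀)
    (wA : iA ≫ pA = 0) (wB : iB ≫ pB = 0) (wC : iC ≫ pC = 0)
    (hA : (ShortComplex.mk iA pA wA).ShortExact)
    (hB : (ShortComplex.mk iB pB wB).ShortExact)
    (hC : (ShortComplex.mk iC pC wC).ShortExact)
    (c : C ⟶ A) (c₀ : C₀ ⟶ A₀) (b : B ⟶ A) (b₀ : B₀ ⟶ A₀) (f₀ : C₀ ⟶ B₀)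
    (hc1 : iC ≫ c = 𝟙 M ≫ iA) (hc2 : c ≫ pA = pC ≫ c₀)
    (hb1 : iB ≫ b = 𝟙 M ≫ iA) (hb2 : b ≫ pA = pB ≫ b₀)
    (hf : f₀ ≫ b₀ = c₀) :
    ∃ f : C ⟶ B, iC ≫ f = 𝟙 M ≫ iB ∧ f ≫ pB = pC ≫ f₀ ∧ f ≫ b = c :=
  stmt0_general M A A₀ B B₀ C C₀ iA pA iB pB iC pC wA wB wC hA hB c c₀ b b₀ f₀ hc1 hc2 hb1 hb2 hf
end

section
/- Let k be a field of characteristic zero, let R = k⟦t⟧ be the formal power series ring in one variable over k, let M be a finitely generated R-module, and let D : M → M be an additive map satisfying the Leibniz rule D(f • m) = f' • m + f • D(m) for all f ∈ R and m ∈ M, where f' denotes the formal derivative of f. Let M^∇ = {m ∈ M : D(m) = 0}, which is a k-linear subspace of M. Then the R-linear map M^∇ ⊗_k R → M determined by m ⊗ f ↦ f • m is an isomorphism of R-modules. -/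
/-!
A connection kills torsion: the torsion of a finite `k⟦X⟧`-module is killed by some `X ^ (n + 1)`,
and `D (X ^ (n + 1) • m) = (n + 1) X ^ n • m + X ^ (n + 1) • D m` shows that `X ^ n` kills it too,
since `n + 1` is a unit in characteristic zero. Hence `M` is free. In a basis with connection
matrix `A`, horizontality of `∑ vᵢ bᵢ` is the linear ODE `v' = -A v`; its fundamental matrix,
built coefficient by coefficient, is the identity at `X = 0`, hence invertible, so its columns give
a horizontal basis. With respect to a horizontal basis, the horizontal elements are exactly those
with constant coordinates.
-/

open PowerSeries Finset Matrix

open scoped TensorProduct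

theorem IsDiscreteValuationRing.exists_torsion_le_torsionBy_pow {R M : Type*} [CommRing R]
    [IsDomain R] [IsDiscreteValuationRing R] [AddCommGroup M] [Module R M] [Module.Finite R M]
    {ϖ : R} (hϖ : Irreducible ϖ) :
    ∃ n : ℕ, Submodule.torsion R M ≤ Submodule.torsionBy R M (ϖ ^ n) := by
  obtain ⟨f, hf_ann, hf⟩ :=
    Submodule.annihilator_top_inter_nonZeroDivisors (Submodule.torsion_isTorsion (R := R) (M := M))
  obtain ⟨n, u, hu⟩ := eq_unit_mul_pow_irreducible (nonZeroDivisors.ne_zero hf) hϖ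
  refine ⟨n, fun m hm => ?_⟩
  have hfm : f • m = 0 := congrArg Subtype.val
    (Submodule.mem_annihilator.mp hf_ann ⟨m, hm⟩ Submodule.mem_top)
  rw [Submodule.mem_torsionBy_iff, ← u.inv_mul_cancel_left (ϖ ^ n), ← hu, mul_smul, hfm, smul_zero]

theorem PowerSeries.X_mul_derivative_X_pow {R : Type*} [CommSemiring R] (n : ℕ) :
    (X : R⟦X⟧) * d⁄dX R (X ^ n) = (n : R⟦X⟧) * X ^ n := by
  cases n with
  | zero => simp
  | succ n => rw [derivative_pow, derivative_X, Nat.add_sub_cancel]; ring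

theorem PowerSeries.map_coeff_matrix_mul {R l m n : Type*} [CommSemiring R] [Fintype m]
    (A : Matrix l m R⟦X⟧) (B : Matrix m n R⟦X⟧) (d : ℕ) :
    (A * B).map (coeff d) = ∑ p ∈ antidiagonal d, A.map (coeff p.1) * B.map (coeff p.2) := by
  ext i j
  simp only [Matrix.map_apply, Matrix.mul_apply, map_sum, coeff_mul, Matrix.sum_apply]
  exact Finset.sum_comm

namespace PowerSeries

variable {k ι : Type*} [Field k] [Fintype ι] [DecidableEq ι]

/-- The recursion `(n + 1) Gₙ₊₁ = ∑ₚ Aₚ Gₙ₋ₚ` is the equation `G' = A G` read off coefficientwise. -/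
noncomputable def fundamentalMatrixCoeff (A : Matrix ι ι k⟦X⟧) : ℕ → Matrix ι ι k
  | 0 => 1
  | n + 1 => (n + 1 : k)⁻¹ •
      ∑ p ∈ range (n + 1), A.map (coeff p) * fundamentalMatrixCoeff A (n - p)

noncomputable def fundamentalMatrix (A : Matrix ι ι k⟦X⟧) : Matrix ι ι k⟦X⟧ :=
  Matrix.of fun i j => mk fun n => fundamentalMatrixCoeff A n i j

variable (A : Matrix ι ι k⟦X⟧)

theorem map_coeff_fundamentalMatrix (n : ℕ) :
    (fundamentalMatrix A).map (coeff n) = fundamentalMatrixCoeff A n := by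
  ext i j
  simp [fundamentalMatrix]

theorem map_derivative_fundamentalMatrix [CharZero k] :
    (fundamentalMatrix A).map (d⁄dX k) = A * fundamentalMatrix A := by
  have hcoeff (n : ℕ) : ((fundamentalMatrix A).map (d⁄dX k)).map (coeff n) =
      (A * fundamentalMatrix A).map (coeff n) := by
    rw [map_coeff_matrix_mul, Nat.sum_antidiagonal_eq_sum_range_succ_mk]
    simp only [map_coeff_fundamentalMatrix]
    rw [← smul_inv_smul₀ (Nat.cast_add_one_ne_zero n : (n + 1 : k) ≠ 0)
      (∑ p ∈ range (n + 1), _), ← fundamentalMatrixCoeff, ← map_coeff_fundamentalMatrix]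
    ext i j
    simp [coeff_derivative, mul_comm]
  ext i j : 1
  ext n
  exact congr($(hcoeff n) i j)

theorem isUnit_det_fundamentalMatrix : IsUnit (fundamentalMatrix A).det := by
  have h : (fundamentalMatrix A).map constantCoeff = 1 := by
    rw [← coeff_zero_eq_constantCoeff, map_coeff_fundamentalMatrix, fundamentalMatrixCoeff]
  rw [isUnit_iff_constantCoeff, RingHom.map_det, RingHom.mapMatrix_apply, h, Matrix.det_one]
  exact isUnit_one

end PowerSeries

section Connection

variable {M : Type*} [AddCommGroup M]

def IsConnection (k : Type*) [Field k] [Module k⟦X⟧ M] (D : M →+ M) : Prop :=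
  ∀ (f : k⟦X⟧) (m : M), D (f • m) = d⁄dX k f • m + f • D m

variable {k : Type*} [Field k] [Module k⟦X⟧ M] {D : M →+ M}

theorem IsConnection.X_pow_succ_smul_eq_zero (hD : IsConnection k D) {m : M} {a : ℕ}
    (h : (X : k⟦X⟧) ^ a • m = 0) : (X : k⟦X⟧) ^ (a + 1) • D m = 0 := by
  have hsum : d⁄dX k (X ^ a) • m + (X : k⟦X⟧) ^ a • D m = 0 := by rw [← hD, h, map_zero]
  calc (X : k⟦X⟧) ^ (a + 1) • D m = X • ((X : k⟦X⟧) ^ a • D m) := by rw [pow_succ', mul_smul]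
    _ = -((X * d⁄dX k (X ^ a)) • m) := by rw [eq_neg_of_add_eq_zero_right hsum, smul_neg, mul_smul]
    _ = 0 := by rw [X_mul_derivative_X_pow, mul_smul, h, smul_zero, neg_zero]

theorem IsConnection.eq_bot_of_le_torsionBy_X_pow [CharZero k] (hD : IsConnection k D)
    {P : Submodule k⟦X⟧ M} (hP : ∀ m ∈ P, D m ∈ P) {n : ℕ}
    (h : P ≤ Submodule.torsionBy k⟦X⟧ M (X ^ n)) : P = ⊥ := by
  induction n with
  | zero => simpa [Submodule.torsionBy_one] using h
  | succ n ih =>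
    refine ih fun m hm => ?_
    have hunit : IsUnit ((n + 1 : k⟦X⟧)) := by
      rw [isUnit_iff_constantCoeff]
      simpa using (Nat.cast_add_one_ne_zero n : (n + 1 : k) ≠ 0)
    have hsum := hD (X ^ (n + 1)) m
    rw [(Submodule.mem_torsionBy_iff _ _).mp (h hm),
      (Submodule.mem_torsionBy_iff _ _).mp (h (hP m hm)),
      map_zero, add_zero, derivative_pow, derivative_X] at hsum
    rw [Submodule.mem_torsionBy_iff, ← hunit.smul_eq_zero, ← mul_smul]
    simpa using hsum.symm

theorem IsConnection.isTorsionFree [CharZero k] [Module.Finite k⟦X⟧ M] (hD : IsConnection k D) :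
    Module.IsTorsionFree k⟦X⟧ M := by
  obtain ⟨n, hn⟩ :=
    IsDiscreteValuationRing.exists_torsion_le_torsionBy_pow (M := M) (X_irreducible (R := k))
  have hstable : ∀ m ∈ Submodule.torsion k⟦X⟧ M, D m ∈ Submodule.torsion k⟦X⟧ M :=
    fun m hm => (Submodule.mem_torsion_iff _).mpr
      ⟨⟨X ^ (n + 1), pow_mem (mem_nonZeroDivisors_of_ne_zero X_ne_zero) _⟩,
        hD.X_pow_succ_smul_eq_zero (hn hm)⟩
  exact Submodule.isTorsionFree_iff_torsion_eq_bot.mpr (hD.eq_bot_of_le_torsionBy_X_pow hstable hn)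

variable {ι : Type*} [Fintype ι] [DecidableEq ι]

noncomputable def connectionMatrix (b : Module.Basis ι k⟦X⟧ M) (D : M →+ M) : Matrix ι ι k⟦X⟧ :=
  b.toMatrix fun j => D (b j)

theorem IsConnection.repr_apply (hD : IsConnection k D) (b : Module.Basis ι k⟦X⟧ M) (m : M)
    (i : ι) :
    b.repr (D m) i = d⁄dX k (b.repr m i) + (connectionMatrix b D *ᵥ b.repr m) i := by
  unfold IsConnection at hD
  conv_lhs => rw [← b.sum_repr m, map_sum]
  simp [hD, Finset.sum_add_distrib, Matrix.mulVec, dotProduct, connectionMatrix,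
    Module.Basis.toMatrix_apply, mul_comm, Finsupp.single_apply]

theorem IsConnection.exists_basis_map_eq_zero [CharZero k] (hD : IsConnection k D)
    (b : Module.Basis ι k⟦X⟧ M) : ∃ b' : Module.Basis ι k⟦X⟧ M, ∀ i, D (b' i) = 0 := by
  set A := connectionMatrix b D
  set G := fundamentalMatrix (-A)
  set v : ι → M := fun j => b.equivFun.symm fun i => G i j
  have hrepr (j : ι) : ⇑(b.repr (v j)) = fun i => G i j := b.equivFun.apply_symm_apply _
  obtain ⟨hli, hspan⟩ := b.is_basis_iff_det.mpr (by
    rw [b.det_apply, show b.toMatrix v = G from Matrix.ext fun i j => congrFun (hrepr j) i]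
    exact isUnit_det_fundamentalMatrix _)
  refine ⟨Module.Basis.mk hli hspan.ge, fun j => b.repr.injective (Finsupp.ext fun i => ?_)⟩
  have hG : d⁄dX k (G i j) = -(A * G) i j := by
    simpa using congr($(map_derivative_fundamentalMatrix (-A)) i j)
  rw [Module.Basis.mk_apply, hD.repr_apply, hrepr, hG, map_zero, Finsupp.coe_zero, Pi.zero_apply,
    neg_add_eq_zero]
  rfl

variable [Module k M] [IsScalarTower k k⟦X⟧ M]

theorem IsConnection.sum_constantCoeff_repr_smul [CharZero k] (hD : IsConnection k D)
    (b : Module.Basis ι k⟦X⟧ M) (hb : ∀ i, D (b i) = 0) {m : M} (hm : D m = 0) :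
    ∑ i, constantCoeff (b.repr m i) • b i = m := by
  have hA : connectionMatrix b D = 0 := by
    ext i j
    simp [connectionMatrix, Module.Basis.toMatrix_apply, hb]
  conv_rhs => rw [← b.sum_repr m]
  refine sum_congr rfl fun i _ => ?_
  rw [← algebraMap_smul k⟦X⟧]
  congr 1
  refine derivative.ext ?_ (by simp)
  have hrepr := hD.repr_apply b m i
  rw [hm, hA] at hrepr
  simpa using hrepr

theorem IsConnection.bijective_liftBaseChange [CharZero k] (hD : IsConnection k D)
    (b : Module.Basis ι k⟦X⟧ M) (hb : ∀ i, D (b i) = 0)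
    (N : Submodule k M) (hN : ∀ m : M, m ∈ N ↔ D m = 0) :
    Function.Bijective (LinearMap.liftBaseChange k⟦X⟧ N.subtype) := by
  set w : ι → N := fun i => ⟨b i, (hN _).2 (hb i)⟩
  have hli : LinearIndependent k w :=
    LinearIndependent.of_comp N.subtype (b.linearIndependent.restrict_scalars' k)
  have hspan : ⊤ ≤ Submodule.span k (Set.range w) := by
    rintro x -
    have hx : ∑ i, constantCoeff (b.repr x i) • w i = x :=
      Subtype.ext (by simpa using hD.sum_constantCoeff_repr_smul b hb ((hN x).1 x.2))
    rw [← hx]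
    exact Submodule.sum_mem _ fun i _ => Submodule.smul_mem _ _ (Submodule.subset_span ⟨i, rfl⟩)
  set bN := Module.Basis.mk hli hspan
  have : LinearMap.liftBaseChange k⟦X⟧ N.subtype =
      ((bN.baseChange k⟦X⟧).equiv b (Equiv.refl ι)).toLinearMap :=
    (bN.baseChange k⟦X⟧).ext fun i => by
      rw [LinearEquiv.coe_coe, Module.Basis.equiv_apply, Equiv.refl_apply,
        Module.Basis.baseChange_apply, LinearMap.liftBaseChange_tmul, one_smul,
        Module.Basis.mk_apply]
      rfl
  rw [this]
  exact LinearEquiv.bijective _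

end Connection

/-- Let `k` be a field of characteristic zero, `R = k⟦t⟧`, `M` a finitely
generated `R`-module and `D : M → M` an additive map satisfying the Leibniz rule
`D (f • m) = f' • m + f • D m` (where `f'` is the formal derivative of `f`). Let
`N = M^∇ = ker D`, a `k`-subspace of `M`. Then the `R`-linear map
`M^∇ ⊗[k] R → M` determined by `m ⊗ f ↦ f • m` is an isomorphism of `R`-modules. -/
theorem stmt4 (k : Type*) [Field k] [CharZero k]
    (M : Type*) [AddCommGroup M] [Module (PowerSeries k) M]
    [Module k M] [IsScalarTower k (PowerSeries k) M]
    [Module.Finite (PowerSeries k) M]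
    (D : M → M)
    (hadd : ∀ m n : M, D (m + n) = D m + D n)
    (hleib : ∀ (f : PowerSeries k) (m : M),
      D (f • m) = (PowerSeries.derivative k f) • m + f • D m)
    (N : Submodule k M) (hN : ∀ m : M, m ∈ N ↔ D m = 0) :
    Function.Bijective (LinearMap.liftBaseChange (PowerSeries k) N.subtype) := by
  have hD : IsConnection k (AddMonoidHom.mk' D hadd) := hleib
  have := hD.isTorsionFree
  obtain ⟨b, hb⟩ := hD.exists_basis_map_eq_zero (Module.Free.chooseBasis k⟦X⟧ M)
  exact hD.bijective_liftBaseChange b hb N hN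
end
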